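/- arXiv:0909.1175 — 2 statements merged into one kernel-verified Lean document; each statement's English description precedes it below -/
import Mathlib

section
/- Let q be an odd prime power, λ the canonical additive character of F_q, m ≥ 1 an integer, and β ∈ F_q. Define δ(m,q;β) = |{(α₁,…,α_m) ∈ (F_q*)^m : α₁ + α₁⁻¹ + ⋯ + α_m + α_m⁻¹ = β}|. Then Σ_{a∈F_q*} λ(−aβ)·K(λ;a²)^m = q·δ(m,q;β) − (q−1)^m, where K(λ;a) = Σ_{α∈F_q*} λ(α + aα⁻¹). -/
open Finset
open scoped Classical

/-- The Kloosterman sum `K(ψ;a) = ∑_{α ∈ F*} ψ(α + a α⁻¹)`. -/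
noncomputable def Kl {F : Type} [Field F] [Fintype F] (ψ : F → ℂ) (a : F) : ℂ :=
  ∑ α : Fˣ, ψ ((α : F) + a * (α : F)⁻¹)

/-- The canonical additive character `λ(x) = exp(2πi·Tr_{F_q/F_p}(x)/p)`. -/
noncomputable def canCharP (p : ℕ) {F : Type} [Field F] [Fintype F] [Algebra (ZMod p) F]
    (x : F) : ℂ :=
  Complex.exp (2 * Real.pi * Complex.I * ((Algebra.trace (ZMod p) F x).val : ℂ) / p)

/-- `δ(m,q;β) = |{(α₁,…,α_m) ∈ (F*)^m : ∑ (α_j + α_j⁻¹) = β}|`. -/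
noncomputable def deltam {F : Type} [Field F] [Fintype F] (m : ℕ) (β : F) : ℕ :=
  (Finset.univ.filter
    (fun α : Fin m → Fˣ => ∑ j, ((α j : F) + (α j : F)⁻¹) = β)).card

/-!
Substituting `α ↦ a α` turns `K(λ; a²)` into `∑_α λ(a (α + α⁻¹))`, so that
`λ(-aβ) K(λ; a²)^m = ∑_t λ(a (S(t) - β))` with `S(t) = ∑_j (t_j + t_j⁻¹)` over `t ∈ (F*)^m`.
Swapping the sums, orthogonality of the nontrivial character `λ` gives
`∑_{a ∈ F*} λ(a c) = q [c = 0] - 1`, and summing over `t` yields `q δ(m,q;β) - (q-1)^m`.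
-/

namespace AddChar

variable {A M : Type*} [AddCommMonoid A] [CommMonoid M]

lemma map_sum_eq_prod {ι : Type*} (ψ : AddChar A M) (s : Finset ι) (f : ι → A) :
    ψ (∑ i ∈ s, f i) = ∏ i ∈ s, ψ (f i) := by
  induction s using Finset.cons_induction with
  | empty => simp
  | cons a s _ ih => rw [Finset.sum_cons, Finset.prod_cons, map_add_eq_mul, ih]

end AddChar

lemma Fintype.sum_units_eq_sum_sub_zero {F M : Type*} [Field F] [Fintype F] [AddCommGroup M]
    (f : F → M) : ∑ a : Fˣ, f a = ∑ a, f a - f 0 := by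
  rw [← Finset.sum_erase_eq_sub (Finset.mem_univ 0),
    Finset.sum_subtype _ (p := fun x : F => x ≠ 0) (fun x => by simp) f]
  exact Fintype.sum_equiv unitsEquivNeZero _ _ (fun _ => rfl)

section CanonicalCharacter

variable (p : ℕ) [Fact p.Prime] {F : Type} [Field F] [Fintype F] [Algebra (ZMod p) F]

noncomputable def canAddChar : AddChar F ℂ :=
  (ZMod.stdAddChar (N := p)).compAddMonoidHom (Algebra.trace (ZMod p) F).toAddMonoidHom

lemma canCharP_eq_canAddChar (x : F) : canCharP p x = canAddChar p x := by
  have := ZMod.stdAddChar_coe (N := p) ((Algebra.trace (ZMod p) F x).val : ℤ)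
  simp only [Int.cast_natCast, ZMod.natCast_zmod_val] at this
  simp [canCharP, canAddChar, this]

lemma canAddChar_ne_one : canAddChar p ≠ (1 : AddChar F ℂ) := by
  obtain ⟨x, hx⟩ := Algebra.trace_surjective (ZMod p) F 1
  rw [AddChar.ne_one_iff]
  refine ⟨x, ?_⟩
  simp only [canAddChar, AddChar.compAddMonoidHom_apply, LinearMap.toAddMonoidHom_coe, hx]
  rw [← (ZMod.stdAddChar (N := p)).map_zero_eq_one, ZMod.injective_stdAddChar.ne_iff]
  exact one_ne_zero

end CanonicalCharacter

lemma AddChar.sum_units_mul_eq_ite {F R : Type*} [Field F] [Fintype F] [CommRing R] [IsDomain R]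
    {ψ : AddChar F R} (hψ : ψ ≠ 1) (c : F) :
    ∑ a : Fˣ, ψ (a * c) = (if c = 0 then (Fintype.card F : R) else 0) - 1 := by
  rw [Fintype.sum_units_eq_sum_sub_zero (fun a => ψ (a * c)),
    AddChar.sum_mulShift c (AddChar.IsPrimitive.of_ne_one hψ), zero_mul, ψ.map_zero_eq_one,
    Nat.cast_ite, Nat.cast_zero]

section Kloosterman

variable {F : Type} [Field F] [Fintype F]

def sumAddInv {m : ℕ} (t : Fin m → Fˣ) : F := ∑ j, ((t j : F) + (t j : F)⁻¹)

lemma Kl_sq_eq_sum (ψ : F → ℂ) (a : Fˣ) :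
    Kl ψ ((a : F) ^ 2) = ∑ α : Fˣ, ψ (a * ((α : F) + (α : F)⁻¹)) := by
  refine Fintype.sum_equiv (Equiv.mulLeft a⁻¹) _ _ (fun α => congrArg ψ ?_)
  have ha : (a : F) ≠ 0 := a.ne_zero
  have hα : (α : F) ≠ 0 := α.ne_zero
  simp only [Equiv.coe_mulLeft, Units.val_mul, Units.val_inv_eq_inv_val]
  field_simp

lemma addChar_mul_Kl_sq_pow (ψ : AddChar F ℂ) (m : ℕ) (β : F) (a : Fˣ) :
    ψ (-a * β) * Kl ψ ((a : F) ^ 2) ^ m = ∑ t : Fin m → Fˣ, ψ (a * (sumAddInv t - β)) := by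
  rw [Kl_sq_eq_sum, Fintype.sum_pow, Finset.mul_sum]
  refine Finset.sum_congr rfl (fun t _ => ?_)
  rw [← ψ.map_sum_eq_prod, ← ψ.map_add_eq_mul, sumAddInv, mul_sub, Finset.mul_sum]
  ring_nf

end Kloosterman

lemma Fintype.sum_ite_sub_one {ι R : Type*} [Fintype ι] [CommRing R] (P : ι → Prop)
    [DecidablePred P] (c : R) :
    ∑ i, ((if P i then c else 0) - 1) = c * (Finset.univ.filter P).card - Fintype.card ι := by
  rw [Finset.sum_sub_distrib, Finset.sum_ite, Finset.sum_const, Finset.sum_const_zero, add_zero,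
    Finset.sum_const, Finset.card_univ, nsmul_eq_mul, nsmul_eq_mul, mul_one, mul_comm]

theorem stmt4_general (p : ℕ) [Fact p.Prime]
    {F : Type} [Field F] [Fintype F] [Algebra (ZMod p) F]
    (m : ℕ) (β : F) :
    ∑ a : Fˣ, canCharP p (-(a : F) * β) * (Kl (canCharP p) ((a : F) ^ 2)) ^ m
      = (Fintype.card F : ℂ) * (deltam m β : ℂ) - ((Fintype.card F : ℂ) - 1) ^ m := by
  have hψ : canCharP p = ⇑(canAddChar p : AddChar F ℂ) := funext (canCharP_eq_canAddChar p)
  have hcard : (Fintype.card (Fin m → Fˣ) : ℂ) = ((Fintype.card F : ℂ) - 1) ^ m := by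
    rw [Fintype.card_fun, Fintype.card_fin, Fintype.card_units,
      Nat.cast_pow, Nat.cast_sub Fintype.card_pos, Nat.cast_one]
  simp_rw [hψ, addChar_mul_Kl_sq_pow]
  rw [Finset.sum_comm]
  simp_rw [AddChar.sum_units_mul_eq_ite (canAddChar_ne_one p), sub_eq_zero]
  rw [Fintype.sum_ite_sub_one, hcard]
  rfl

theorem stmt4 (p n : ℕ) [Fact p.Prime] (hp : Odd p) (hn : 0 < n)
    {F : Type} [Field F] [Fintype F] [Algebra (ZMod p) F]
    (hcard : Fintype.card F = p ^ n)
    (m : ℕ) (hm : 1 ≤ m) (β : F) :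
    ∑ a : Fˣ, canCharP p (-(a : F) * β) * (Kl (canCharP p) ((a : F) ^ 2)) ^ m
      = (Fintype.card F : ℂ) * (deltam m β : ℂ) - ((Fintype.card F : ℂ) - 1) ^ m :=
  stmt4_general p m β
end

section
/- Let q = 3^r and let B ⊆ F_q^n be an F_q-linear code. Then the dual of the restriction of B to F_3 equals the trace of the dual: (B|_{F_3})^⊥ = tr(B^⊥), where B|_{F_3} = B ∩ F_3^n, tr is applied componentwise, and duals are taken with respect to the standard inner products over F_3 and F_q respectively. -/
/-!
For `u` over `K` and `w` over `L`, `u ⬝ᵥ tr w = tr (u ⬝ᵥ w)`. Hence `u` is orthogonal to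
`tr (B^⊥)` iff `tr (u ⬝ᵥ w) = 0` for all `w ∈ B^⊥`. Since `B^⊥` is an `L`-subspace and the trace
is a nonzero functional, rescaling `w` shows that this forces `u ⬝ᵥ w = 0`, i.e. `u ∈ B^⊥⊥ = B`.
So `tr (B^⊥)^⊥ = B|_K`, and taking duals once more gives `(B|_K)^⊥ = tr (B^⊥)`.
-/

open LinearMap (BilinForm)

section DualCode

variable {K ι : Type*} [CommSemiring K] [Fintype ι]

theorem dotProductBilin_isSymm : BilinForm.IsSymm (dotProductBilin K K : BilinForm K (ι → K)) :=
  ⟨dotProduct_comm⟩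

theorem dotProductBilin_nondegenerate :
    (dotProductBilin K K : BilinForm K (ι → K)).Nondegenerate :=
  ⟨fun v hv => dotProduct_eq_zero v hv,
    fun v hv => dotProduct_eq_zero v fun w => dotProduct_comm v w ▸ hv w⟩

variable (K) in
def dualCode (C : Submodule K (ι → K)) : Submodule K (ι → K) :=
  BilinForm.orthogonal (dotProductBilin K K) C

theorem mem_dualCode {C : Submodule K (ι → K)} {v : ι → K} :
    v ∈ dualCode K C ↔ ∀ c ∈ C, v ⬝ᵥ c = 0 := by
  simp only [dualCode, BilinForm.mem_orthogonal_iff, dotProductBilin_apply_apply,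
    dotProduct_comm _ v]

theorem dualCode_dualCode {K : Type*} [Field K] (C : Submodule K (ι → K)) :
    dualCode K (dualCode K C) = C :=
  BilinForm.orthogonal_orthogonal dotProductBilin_nondegenerate dotProductBilin_isSymm.isRefl C

end DualCode

section SubfieldSubcode

variable (K : Type*) {L ι : Type*} [CommRing K] [CommRing L] [Algebra K L] [Fintype ι]

def subfieldSubcode (B : Submodule L (ι → L)) : Submodule K (ι → K) :=
  (B.restrictScalars K).comap ((Algebra.linearMap K L).compLeft ι)

noncomputable def traceCode (B : Submodule L (ι → L)) : Submodule K (ι → K) :=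
  (B.restrictScalars K).map ((Algebra.trace K L).compLeft ι)

variable {K}

theorem dotProduct_trace_compLeft (u : ι → K) (w : ι → L) :
    u ⬝ᵥ (Algebra.trace K L).compLeft ι w
      = Algebra.trace K L ((Algebra.linearMap K L).compLeft ι u ⬝ᵥ w) := by
  simp only [dotProduct, map_sum, LinearMap.compLeft_apply, Function.comp_apply,
    Algebra.linearMap_apply, ← Algebra.smul_def, map_smul, smul_eq_mul]

end SubfieldSubcode

section FieldExtension

variable {K L ι : Type*} [Field K] [Field L] [Algebra K L] [Fintype ι]
  [FiniteDimensional K L] [Algebra.IsSeparable K L]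

theorem forall_trace_dotProduct_eq_zero_iff {W : Submodule L (ι → L)} {a : ι → L} :
    (∀ w ∈ W, Algebra.trace K L (a ⬝ᵥ w) = 0) ↔ ∀ w ∈ W, a ⬝ᵥ w = 0 := by
  refine ⟨fun h w hw => ?_, fun h w hw => by rw [h w hw, map_zero]⟩
  by_contra hx
  obtain ⟨t, ht⟩ := Algebra.trace_surjective K L 1
  have := h ((t / (a ⬝ᵥ w)) • w) (W.smul_mem _ hw)
  rw [dotProduct_smul, smul_eq_mul, div_mul_cancel₀ _ hx, ht] at this
  exact one_ne_zero this

theorem dualCode_traceCode_dualCode (B : Submodule L (ι → L)) :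
    dualCode K (traceCode K (dualCode L B)) = subfieldSubcode K B := by
  ext u
  calc u ∈ dualCode K (traceCode K (dualCode L B))
      ↔ ∀ w ∈ dualCode L B, u ⬝ᵥ (Algebra.trace K L).compLeft ι w = 0 := by
        simp only [mem_dualCode, traceCode, Submodule.mem_map, Submodule.restrictScalars_mem,
          forall_exists_index, and_imp, forall_apply_eq_imp_iff₂]
    _ ↔ ∀ w ∈ dualCode L B, Algebra.trace K L ((Algebra.linearMap K L).compLeft ι u ⬝ᵥ w) = 0 := by
        simp only [dotProduct_trace_compLeft]
    _ ↔ ∀ w ∈ dualCode L B, (Algebra.linearMap K L).compLeft ι u ⬝ᵥ w = 0 :=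
        forall_trace_dotProduct_eq_zero_iff
    _ ↔ u ∈ subfieldSubcode K B := by
        rw [← mem_dualCode, dualCode_dualCode]
        rfl

theorem dualCode_subfieldSubcode (B : Submodule L (ι → L)) :
    dualCode K (subfieldSubcode K B) = traceCode K (dualCode L B) := by
  rw [← dualCode_traceCode_dualCode, dualCode_dualCode]

end FieldExtension

theorem stmt12_general {F : Type} [Field F] [Fintype F] [Algebra (ZMod 3) F]
    (n : ℕ) (B : Submodule F (Fin n → F)) :
    {v : Fin n → ZMod 3 |
        ∀ u : Fin n → ZMod 3,
          (fun i => algebraMap (ZMod 3) F (u i)) ∈ B → ∑ i, v i * u i = 0}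
      = {v : Fin n → ZMod 3 |
          ∃ w : Fin n → F, (∀ c ∈ B, ∑ i, w i * c i = 0)
            ∧ v = fun i => Algebra.trace (ZMod 3) F (w i)} := by
  ext v
  have h := SetLike.ext_iff.mp (dualCode_subfieldSubcode (K := ZMod 3) B) v
  simp only [mem_dualCode, subfieldSubcode, traceCode, Submodule.mem_map, Submodule.mem_comap,
    Submodule.restrictScalars_mem] at h
  exact h.trans (exists_congr fun w => and_congr Iff.rfl eq_comm)

theorem stmt12 {F : Type} [Field F] [Fintype F] [Algebra (ZMod 3) F]
    (r : ℕ) (hr : 0 < r) (hcard : Fintype.card F = 3 ^ r)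
    (n : ℕ) (B : Submodule F (Fin n → F)) :
    {v : Fin n → ZMod 3 |
        ∀ u : Fin n → ZMod 3,
          (fun i => algebraMap (ZMod 3) F (u i)) ∈ B → ∑ i, v i * u i = 0}
      = {v : Fin n → ZMod 3 |
          ∃ w : Fin n → F, (∀ c ∈ B, ∑ i, w i * c i = 0)
            ∧ v = fun i => Algebra.trace (ZMod 3) F (w i)} :=
  stmt12_general n B
end
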